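/- arXiv:2304.00662 — 5 statements merged into one kernel-verified Lean document; each statement's English description precedes it below -/
import Mathlib

section
/- The q-deformed Witt Hom-Lie algebra (V^q, [·,·], α), with basis {L_n : n ∈ ℤ}, bracket [L_m, L_n] = ({m} - {n}) L_{m+n} and twisting map α(L_n) = (1 + q^n) L_n, is multiplicative (i.e., α([x,y]) = [α(x),α(y)] for all x, y) if and only if q = -1. -/
/-!
Since `α` is diagonal in the basis `L_n` and `[L_m, L_n]` is a multiple of `L_{m+n}`,
multiplicativity amounts to the scalar identities
`(1 + q^(m+n)) ({m} - {n}) = (1 + q^m) (1 + q^n) ({m} - {n})`.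
At `(m, n) = (1, 0)` this reads `1 + q = 2 (1 + q)`, forcing `q = -1`. Conversely, at `q = -1`
put `s = (-1)^m`, `t = (-1)^n`, so `{m} - {n} = (t - s) / 2`; then both sides vanish, because
`(1 + s t) (t - s) = 0` and `(1 + s) (1 + t) (t - s) = t² - s² = 0`.
-/

open Classical in
noncomputable def qNumber {K : Type*} [Field K] (q : K) (n : ℤ) : K :=
  if q = 1 then n else (1 - q ^ n) / (1 - q)

section qNumber

variable {K : Type*} [Field K]

@[simp] lemma qNumber_zero (q : K) : qNumber q 0 = 0 := by
  unfold qNumber; split_ifs <;> simp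

@[simp] lemma qNumber_one (q : K) : qNumber q 1 = 1 := by
  unfold qNumber; split_ifs with h
  · simp
  · rw [zpow_one, div_self (sub_ne_zero.mpr (Ne.symm h))]

lemma qNumber_neg_one [CharZero K] (n : ℤ) : qNumber (-1 : K) n = (1 - (-1) ^ n) / 2 := by
  rw [qNumber, if_neg (by norm_num)]; norm_num

lemma neg_one_zpow_sq (n : ℤ) : ((-1 : K) ^ n) ^ 2 = 1 := by
  rw [← zpow_natCast, ← zpow_mul, mul_comm, zpow_mul]; norm_num

lemma qNumber_neg_one_twist_eq [CharZero K] (m n : ℤ) :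
    (1 + (-1 : K) ^ (m + n)) * (qNumber (-1) m - qNumber (-1) n) =
      (1 + (-1) ^ m) * (1 + (-1) ^ n) * (qNumber (-1) m - qNumber (-1) n) := by
  rw [qNumber_neg_one, qNumber_neg_one, zpow_add₀ (by norm_num)]
  linear_combination (neg_one_zpow_sq (K := K) m - neg_one_zpow_sq (K := K) n) / 2

end qNumber

section IsMultiplicative

variable {ι R M : Type*} [CommRing R] [AddCommGroup M] [Module R M]

lemma Module.Basis.smul_eq_smul_iff (b : Module.Basis ι R M) (i : ι) {r s : R} :
    r • b i = s • b i ↔ r = s := by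
  refine ⟨fun h => ?_, fun h => h ▸ rfl⟩
  simpa using congr(b.repr $h i)

def LinearMap.IsMultiplicative (α : M →ₗ[R] M) (br : M →ₗ[R] M →ₗ[R] M) : Prop :=
  ∀ x y, α (br x y) = br (α x) (α y)

theorem LinearMap.isMultiplicative_iff_of_basis [Add ι] (b : Module.Basis ι R M)
    (c : ι → ι → R) (br : M →ₗ[R] M →ₗ[R] M) (hbr : ∀ m n, br (b m) (b n) = c m n • b (m + n))
    (ev : ι → R) (α : M →ₗ[R] M) (hα : ∀ n, α (b n) = ev n • b n) :
    α.IsMultiplicative br ↔ ∀ m n, ev (m + n) * c m n = ev m * ev n * c m n := by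
  have basis_case (m n : ι) : α (br (b m) (b n)) = br (α (b m)) (α (b n)) ↔
      ev (m + n) * c m n = ev m * ev n * c m n := by
    simp only [hα, hbr, map_smul, LinearMap.smul_apply, smul_smul, b.smul_eq_smul_iff]
    ring_nf
  refine ⟨fun h m n => (basis_case m n).1 (h _ _), fun h x y => ?_⟩
  have : br.compr₂ α = br.compl₁₂ α α :=
    b.ext fun m => b.ext fun n => by simpa using (basis_case m n).2 (h m n)
  simpa using congr($this x y)

end IsMultiplicative

open Classical in
theorem qWitt_multiplicative_iff_general {K M : Type*} [Field K] [CharZero K]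
    [AddCommGroup M] [Module K M]
    (q : K) (b : Module.Basis ℤ K M)
    (qn : ℤ → K) (hqn : ∀ n : ℤ, qn n = if q = 1 then (n : K) else (1 - q ^ n) / (1 - q))
    (br : M →ₗ[K] M →ₗ[K] M)
    (hbr : ∀ m n : ℤ, br (b m) (b n) = (qn m - qn n) • b (m + n))
    (α : M →ₗ[K] M) (hα : ∀ n : ℤ, α (b n) = (1 + q ^ n) • b n) :
    (∀ x y : M, α (br x y) = br (α x) (α y)) ↔ q = -1 := by
  obtain rfl : qn = qNumber q := funext hqn
  change α.IsMultiplicative br ↔ q = -1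
  rw [LinearMap.isMultiplicative_iff_of_basis b _ br hbr _ α hα]
  constructor
  · intro h
    have at_one_zero := h 1 0
    simp only [qNumber_one, qNumber_zero, zpow_one, zpow_zero, add_zero] at at_one_zero
    linear_combination -at_one_zero
  · rintro rfl
    exact qNumber_neg_one_twist_eq

open Classical in
/-- The q-deformed Witt Hom-Lie algebra is multiplicative if and only if q = -1. -/
theorem qWitt_multiplicative_iff {K M : Type*} [Field K] [CharZero K]
    [AddCommGroup M] [Module K M]
    (q : K) (hq : q ≠ 0) (b : Module.Basis ℤ K M)
    (qn : ℤ → K) (hqn : ∀ n : ℤ, qn n = if q = 1 then (n : K) else (1 - q ^ n) / (1 - q))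
    (br : M →ₗ[K] M →ₗ[K] M)
    (hbr : ∀ m n : ℤ, br (b m) (b n) = (qn m - qn n) • b (m + n))
    (α : M →ₗ[K] M) (hα : ∀ n : ℤ, α (b n) = (1 + q ^ n) • b n) :
    (∀ x y : M, α (br x y) = br (α x) (α y)) ↔ q = -1 :=
  qWitt_multiplicative_iff_general q b qn hqn br hbr α hα
end

section
/- Let (A, [·,·], α) be a Hom-Leibniz algebra and P an averaging operator on A. Define {x, y} := [P(x), y]. Then (A, {·,·}, α) is again a Hom-Leibniz algebra, i.e., {α(x), {y,z}} = {{x,y}, α(z)} + {α(y), {x,z}} for all x, y, z ∈ A. -/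
/-- An averaging operator on a Hom-Leibniz algebra induces a new Hom-Leibniz
structure via {x,y} = [P(x), y]. -/
theorem averaging_induces_homLeibniz {K M : Type*} [Field K] [AddCommGroup M] [Module K M]
    (br : M →ₗ[K] M →ₗ[K] M) (α P : M →ₗ[K] M)
    (hLeib : ∀ x y z : M, br (α x) (br y z) = br (br x y) (α z) + br (α y) (br x z))
    (hcomm : α ∘ₗ P = P ∘ₗ α)
    (hav1 : ∀ x y : M, br (P x) (P y) = P (br (P x) y))
    (hav2 : ∀ x y : M, br (P x) (P y) = P (br x (P y))) :
    ∀ x y z : M,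
      br (P (α x)) (br (P y) z)
        = br (P (br (P x) y)) (α z) + br (P (α y)) (br (P x) z) := by
  intro x y z
  have hc : ∀ v : M, P (α v) = α (P v) := fun v =>
    (LinearMap.congr_fun hcomm v).symm
  rw [hc x, hc y, hLeib (P x) (P y) z, hav1]
end

section
/- Let (A, [·,·], α) be a Hom-Lie algebra, P an averaging operator on A, and suppose P is surjective. Then the new bracket {x, y} := [P(x), y] makes (A, {·,·}, α) a Hom-Lie algebra (skew-symmetric and satisfying the Hom-Jacobi identity). -/
/-- A surjective averaging operator on a Hom-Lie algebra induces a Hom-Lie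
structure via {x,y} = [P(x), y]. -/
theorem surjective_averaging_induces_homLie {K M : Type*} [Field K]
    [AddCommGroup M] [Module K M]
    (br : M →ₗ[K] M →ₗ[K] M) (α P : M →ₗ[K] M)
    (hskew : ∀ x y : M, br x y = - br y x)
    (hJac : ∀ x y z : M, br (α x) (br y z) + br (α y) (br z x) + br (α z) (br x y) = 0)
    (hcomm : α ∘ₗ P = P ∘ₗ α)
    (hav1 : ∀ x y : M, br (P x) (P y) = P (br (P x) y))
    (hav2 : ∀ x y : M, br (P x) (P y) = P (br x (P y)))
    (hsurj : Function.Surjective P) :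
    (∀ x y : M, br (P x) y = - br (P y) x) ∧
    (∀ x y z : M,
      br (P (α x)) (br (P y) z) + br (P (α y)) (br (P z) x)
        + br (P (α z)) (br (P x) y) = 0) := by
  have hc : ∀ m : M, α (P m) = P (α m) := fun m => LinearMap.congr_fun hcomm m
  -- key lemma: P can be moved across the bracket
  have L : ∀ a b : M, br (P (P a)) b = br (P a) (P b) := by
    intro a b
    obtain ⟨c, rfl⟩ := hsurj b
    rw [hav2 (P a) c, hav1 a (P c)]
  constructor
  · intro x y
    obtain ⟨c, rfl⟩ := hsurj y
    rw [hskew (P x) (P c), L c x]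
  · intro x y z
    obtain ⟨a, rfl⟩ := hsurj x
    obtain ⟨b, rfl⟩ := hsurj y
    obtain ⟨c, rfl⟩ := hsurj z
    have T1 : br (P (α (P a))) (br (P (P b)) (P c))
        = br (α (P a)) (br (P (P b)) (P (P c))) := by
      rw [hc a, L (α a) (br (P (P b)) (P c)), ← hav1 (P b) (P c), ← hc a]
    have T2 : br (P (α (P b))) (br (P (P c)) (P a))
        = br (α (P (P b))) (br (P (P c)) (P a)) := by
      rw [hc (P b)]
    have T3 : br (P (α (P c))) (br (P (P a)) (P b))
        = br (α (P (P c))) (br (P a) (P (P b))) := by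
      rw [hc (P c), L a (P b)]
    rw [T1, T2, T3]
    exact hJac (P a) (P (P b)) (P (P c))
end

section
/- Let P and Q be averaging operators on a Hom-Lie algebra (A, [·,·], α) such that for all x, y ∈ A: P([Q(x),y]) + Q([P(x),y]) = [Q(x),P(y)] + [P(x),Q(y)]. Then P + Q is an averaging operator. -/
/-- If P and Q are averaging operators on a Hom-Lie algebra satisfying the
compatibility condition, then P + Q is an averaging operator. -/
theorem averaging_sum {K M : Type*} [Field K] [AddCommGroup M] [Module K M]
    (br : M →ₗ[K] M →ₗ[K] M) (α P Q : M →ₗ[K] M)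
    (hskew : ∀ x y : M, br x y = - br y x)
    (hJac : ∀ x y z : M, br (α x) (br y z) + br (α y) (br z x) + br (α z) (br x y) = 0)
    (hPcomm : α ∘ₗ P = P ∘ₗ α)
    (hPav1 : ∀ x y : M, br (P x) (P y) = P (br (P x) y))
    (hPav2 : ∀ x y : M, br (P x) (P y) = P (br x (P y)))
    (hQcomm : α ∘ₗ Q = Q ∘ₗ α)
    (hQav1 : ∀ x y : M, br (Q x) (Q y) = Q (br (Q x) y))
    (hQav2 : ∀ x y : M, br (Q x) (Q y) = Q (br x (Q y)))
    (hcompat : ∀ x y : M,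
      P (br (Q x) y) + Q (br (P x) y) = br (Q x) (P y) + br (P x) (Q y)) :
    α ∘ₗ (P + Q) = (P + Q) ∘ₗ α ∧
    (∀ x y : M, br ((P + Q) x) ((P + Q) y) = (P + Q) (br ((P + Q) x) y)) ∧
    (∀ x y : M, br ((P + Q) x) ((P + Q) y) = (P + Q) (br x ((P + Q) y))) := by
  refine ⟨?_, ?_, ?_⟩
  · rw [LinearMap.comp_add, LinearMap.add_comp, hPcomm, hQcomm]
  · intro x y
    simp only [LinearMap.add_apply, map_add]
    rw [← hPav1, ← hQav1,
      show br (P x) (P y) + br (Q x) (P y) + (br (P x) (Q y) + br (Q x) (Q y))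
        = br (P x) (P y) + br (Q x) (Q y) + (br (Q x) (P y) + br (P x) (Q y)) from by abel,
      ← hcompat x y]
    abel
  · intro x y
    have key : P (br x (Q y)) + Q (br x (P y)) = br (Q x) (P y) + br (P x) (Q y) := by
      have h := hcompat y x
      rw [hskew x (Q y), hskew x (P y), map_neg, map_neg, hskew (Q x) (P y),
        hskew (P x) (Q y), ← neg_add, ← neg_add, h]
      abel
    simp only [LinearMap.add_apply, map_add]
    rw [← hPav2, ← hQav2,
      show br (P x) (P y) + br (Q x) (P y) + (br (P x) (Q y) + br (Q x) (Q y))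
        = br (P x) (P y) + br (Q x) (Q y) + (br (Q x) (P y) + br (P x) (Q y)) from by abel,
      ← key]
    abel
end

section
/- Let (A, [·,·], α) be a Hom-Lie algebra and P: A → A a linear idempotent (P² = P) commuting with α, corresponding to the decomposition A = A₀ ⊕ A₁ with A₀ = im P, A₁ = ker P. Then P is an averaging operator if and only if [A₀, A₀] ⊆ A₀ and [A₀, A₁] ⊆ A₁. -/
/-- An idempotent linear map commuting with α is an averaging operator if and only if
[A₀, A₀] ⊆ A₀ and [A₀, A₁] ⊆ A₁, where A₀ = im P and A₁ = ker P. -/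
theorem idempotent_averaging_iff {K M : Type*} [Field K] [AddCommGroup M] [Module K M]
    (br : M →ₗ[K] M →ₗ[K] M) (α P : M →ₗ[K] M)
    (hskew : ∀ x y : M, br x y = - br y x)
    (hJac : ∀ x y z : M, br (α x) (br y z) + br (α y) (br z x) + br (α z) (br x y) = 0)
    (hcomm : α ∘ₗ P = P ∘ₗ α)
    (hidem : P ∘ₗ P = P) :
    (∀ x y : M, br (P x) (P y) = P (br (P x) y)) ↔
      ((∀ x ∈ LinearMap.range P, ∀ y ∈ LinearMap.range P, br x y ∈ LinearMap.range P) ∧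
       (∀ x ∈ LinearMap.range P, ∀ y ∈ LinearMap.ker P, br x y ∈ LinearMap.ker P)) := by
  have hPP : ∀ z : M, P (P z) = P z := fun z => congrFun (congrArg DFunLike.coe hidem) z
  constructor
  · intro hA
    constructor
    · rintro x ⟨a, rfl⟩ y ⟨b, rfl⟩
      exact ⟨br (P a) b, (hA a b).symm⟩
    · rintro x ⟨a, rfl⟩ y hy
      have hy0 : P y = 0 := hy
      have := hA a y
      simp only [LinearMap.mem_ker]
      rw [← this, hy0, map_zero]
  · rintro ⟨h0, h1⟩ x y
    have hker : y - P y ∈ LinearMap.ker P := by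
      simp [LinearMap.mem_ker, map_sub, hPP]
    have h2 := h1 (P x) ⟨x, rfl⟩ (y - P y) hker
    have h3 := h0 (P x) ⟨x, rfl⟩ (P y) ⟨y, rfl⟩
    obtain ⟨c, hc⟩ := h3
    have hdecomp : br (P x) y = br (P x) (P y) + br (P x) (y - P y) := by
      rw [← map_add]; congr 1; abel
    rw [hdecomp, map_add, LinearMap.mem_ker.mp h2, add_zero, ← hc, hPP, hc]
end
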